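/- arXiv:2006.04061 — 5 statements merged into one kernel-verified Lean document; each statement's English description precedes it below -/
import Mathlib

section
/- For two policies π and π̃ on the same MDP, define the hypothetical hybrid policy π^hypo by π^hypo(·|s) = π̃(·|s) if V^π̃(s) > V^π(s), and π^hypo(·|s) = π(·|s) otherwise. Then for every state s, V^{π^hypo}(s) ≥ V^π(s). -/
open Finset Filter

/-- Bellman expectation operator of policy `μ` on a finite MDP. -/
noncomputable def Bellman {S A : Type*} [Fintype S] [Fintype A]
    (P : S → A → S → ℝ) (R : S → A → ℝ) (γ : ℝ)
    (μ : S → A → ℝ) (V : S → ℝ) : S → ℝ :=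
  fun s => ∑ a, μ s a * ∑ s', P s a s' * (R s a + γ * V s')

/-- `μ s` is a probability distribution over actions for each state `s`. -/
def IsPolicy {S A : Type*} [Fintype A] (μ : S → A → ℝ) : Prop :=
  (∀ s a, 0 ≤ μ s a) ∧ ∀ s, ∑ a, μ s a = 1

/-- `P · s a` is a probability distribution over next states. -/
def IsKernel {S A : Type*} [Fintype S] (P : S → A → S → ℝ) : Prop :=
  (∀ s a s', 0 ≤ P s a s') ∧ ∀ s a, ∑ s', P s a s' = 1
theorem hybrid_policy_improves_over_pi {S A : Type*} [Fintype S] [Fintype A]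
    (P : S → A → S → ℝ) (R : S → A → ℝ) (γ : ℝ)
    (hγ0 : 0 < γ) (hγ1 : γ < 1) (hP : IsKernel P)
    (π πt : S → A → ℝ) (hπ : IsPolicy π) (hπt : IsPolicy πt)
    (Vπ Vπt : S → ℝ)
    (hVπ : Vπ = Bellman P R γ π Vπ)
    (hVπt : Vπt = Bellman P R γ πt Vπt)
    (πh : S → A → ℝ)
    (hπh : ∀ s, πh s = if Vπ s < Vπt s then πt s else π s)
    (Vh : S → ℝ) (hVh : Vh = Bellman P R γ πh Vh) :
    ∀ s, Vπ s ≤ Vh s := by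
  intro s
  set f : S → ℝ := fun t => max (Vπ t) (Vπt t) - Vh t with hf
  obtain ⟨s0, -, hmax⟩ := Finset.exists_max_image Finset.univ f ⟨s, Finset.mem_univ s⟩
  have hmax' : ∀ t, f t ≤ f s0 := fun t => hmax t (Finset.mem_univ t)
  have key : ∀ (μ : S → A → ℝ) (V : S → ℝ), IsPolicy μ →
      V = Bellman P R γ μ V → πh s0 = μ s0 →
      (∀ t, V t ≤ max (Vπ t) (Vπt t)) → V s0 - Vh s0 ≤ γ * f s0 := by
    intro μ V hμ hV hrow hle
    have h1 : V s0 = ∑ a, μ s0 a * ∑ s', P s0 a s' * (R s0 a + γ * V s') := by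
      conv_lhs => rw [hV]
      rfl
    have h2 : Vh s0 = ∑ a, μ s0 a * ∑ s', P s0 a s' * (R s0 a + γ * Vh s') := by
      conv_lhs => rw [hVh]
      simp [Bellman, hrow]
    have h3 : V s0 - Vh s0
        = ∑ a, μ s0 a * ∑ s', P s0 a s' * (γ * (V s' - Vh s')) := by
      rw [h1, h2, ← Finset.sum_sub_distrib]
      refine Finset.sum_congr rfl fun a _ => ?_
      rw [← mul_sub, ← Finset.sum_sub_distrib]
      congr 1
      refine Finset.sum_congr rfl fun s' _ => ?_
      ring
    have inner : ∀ a, ∑ s', P s0 a s' * (γ * f s0) = γ * f s0 := fun a => by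
      rw [← Finset.sum_mul, hP.2 s0 a, one_mul]
    rw [h3]
    calc ∑ a, μ s0 a * ∑ s', P s0 a s' * (γ * (V s' - Vh s'))
        ≤ ∑ a, μ s0 a * ∑ s', P s0 a s' * (γ * f s0) := by
          refine Finset.sum_le_sum fun a _ => ?_
          refine mul_le_mul_of_nonneg_left ?_ (hμ.1 s0 a)
          refine Finset.sum_le_sum fun s' _ => ?_
          refine mul_le_mul_of_nonneg_left ?_ (hP.1 s0 a s')
          refine mul_le_mul_of_nonneg_left ?_ hγ0.le
          have h4 : V s' - Vh s' ≤ f s' := by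
            have := hle s'; simp only [hf]; linarith
          linarith [hmax' s']
      _ = γ * f s0 := by
          simp only [inner, ← Finset.sum_mul, hμ.2 s0, one_mul]
  have hcontr : f s0 ≤ γ * f s0 := by
    by_cases h : Vπ s0 < Vπt s0
    · have := key πt Vπt hπt hVπt (by rw [hπh]; simp [h])
        (fun t => le_max_right _ _)
      have hm : f s0 = Vπt s0 - Vh s0 := by
        simp only [hf]; rw [max_eq_right h.le]
      rw [hm] at this ⊢; linarith
    · have := key π Vπ hπ hVπ (by rw [hπh]; simp [h])
        (fun t => le_max_left _ _)
      have hm : f s0 = Vπ s0 - Vh s0 := by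
        simp only [hf]; rw [max_eq_left (not_lt.mp h)]
      rw [hm] at this ⊢; linarith
  have hf0 : f s0 ≤ 0 := by nlinarith
  have h5 := hmax' s
  have hle : Vπ s ≤ max (Vπ s) (Vπt s) := le_max_left _ _
  have h6 : f s = max (Vπ s) (Vπt s) - Vh s := rfl
  rw [h6] at h5
  linarith
end

section
/- With the hybrid policy π^hypo as defined (following π̃ at states where V^π̃(s) > V^π(s), and π otherwise), for every state s, V^{π^hypo}(s) ≥ V^π̃(s). -/
open Finset Filter

/-- Weighted average of values each ≥ c is ≥ c. -/
lemma avg_ge {ι : Type*} [Fintype ι] (w f : ι → ℝ) (c : ℝ)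
    (hw0 : ∀ i, 0 ≤ w i) (hw1 : ∑ i, w i = 1) (hf : ∀ i, c ≤ f i) :
    c ≤ ∑ i, w i * f i := by
  have : ∑ i, w i * c ≤ ∑ i, w i * f i :=
    Finset.sum_le_sum fun i _ => mul_le_mul_of_nonneg_left (hf i) (hw0 i)
  calc c = (∑ i, w i) * c := by rw [hw1, one_mul]
    _ = ∑ i, w i * c := by rw [Finset.sum_mul]
    _ ≤ _ := this

lemma step {S A : Type*} [Fintype S] [Fintype A]
    (P : S → A → S → ℝ) (R : S → A → ℝ) (γ : ℝ) (hγ0 : 0 ≤ γ)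
    (hP : IsKernel P) (s : S) (row : A → ℝ)
    (hrow0 : ∀ a, 0 ≤ row a) (hrow1 : ∑ a, row a = 1)
    (Vh Vμ : S → ℝ) (δ : ℝ) (hδ : ∀ t, δ ≤ Vh t - Vμ t) :
    γ * δ ≤ (∑ a, row a * ∑ s', P s a s' * (R s a + γ * Vh s'))
          - (∑ a, row a * ∑ s', P s a s' * (R s a + γ * Vμ s')) := by
  have hdiff : (∑ a, row a * ∑ s', P s a s' * (R s a + γ * Vh s'))
          - (∑ a, row a * ∑ s', P s a s' * (R s a + γ * Vμ s'))
      = ∑ a, row a * ∑ s', P s a s' * (γ * (Vh s' - Vμ s')) := by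
    rw [← Finset.sum_sub_distrib]
    refine Finset.sum_congr rfl fun a _ => ?_
    rw [← mul_sub, ← Finset.sum_sub_distrib]
    congr 1
    refine Finset.sum_congr rfl fun s' _ => ?_
    ring
  rw [hdiff]
  refine avg_ge _ _ _ hrow0 hrow1 fun a => ?_
  refine avg_ge _ _ _ (fun s' => hP.1 s a s') (hP.2 s a) fun s' => ?_
  exact mul_le_mul_of_nonneg_left (hδ s') hγ0

theorem hybrid_policy_improves_over_pit {S A : Type*} [Fintype S] [Fintype A]
    (P : S → A → S → ℝ) (R : S → A → ℝ) (γ : ℝ)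
    (hγ0 : 0 < γ) (hγ1 : γ < 1) (hP : IsKernel P)
    (π πt : S → A → ℝ) (hπ : IsPolicy π) (hπt : IsPolicy πt)
    (Vπ Vπt : S → ℝ)
    (hVπ : Vπ = Bellman P R γ π Vπ)
    (hVπt : Vπt = Bellman P R γ πt Vπt)
    (πh : S → A → ℝ)
    (hπh : ∀ s, πh s = if Vπ s < Vπt s then πt s else π s)
    (Vh : S → ℝ) (hVh : Vh = Bellman P R γ πh Vh) :
    ∀ s, Vπt s ≤ Vh s := by
  intro s
  have hne : (Finset.univ : Finset S).Nonempty := ⟨s, Finset.mem_univ s⟩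
  set W : S → ℝ := fun t => max (Vπ t) (Vπt t) with hWdef
  obtain ⟨s₀, -, hmin⟩ := Finset.exists_min_image Finset.univ (fun t => Vh t - W t) hne
  set δ := Vh s₀ - W s₀ with hδdef
  have key : ∀ t, δ ≤ Vh t - W t := fun t => hmin t (Finset.mem_univ t)
  have hVhB : ∀ t, Vh t = Bellman P R γ πh Vh t := fun t => congrFun hVh t
  have hgd : γ * δ ≤ δ := by
    by_cases h : Vπ s₀ < Vπt s₀
    · have hπhs : πh s₀ = πt s₀ := by rw [hπh s₀, if_pos h]
      have hW : W s₀ = Vπt s₀ := max_eq_right h.le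
      have hkey : ∀ t, δ ≤ Vh t - Vπt t := fun t => by
        have := key t
        have : Vπt t ≤ W t := le_max_right _ _
        linarith [key t]
      have := step P R γ hγ0.le hP s₀ (πt s₀) (hπt.1 s₀) (hπt.2 s₀) Vh Vπt δ hkey
      have hVh0 : Vh s₀ = ∑ a, πt s₀ a * ∑ s', P s₀ a s' * (R s₀ a + γ * Vh s') := by
        rw [hVhB s₀]; unfold Bellman; rw [hπhs]
      have hVt0 : Vπt s₀ = ∑ a, πt s₀ a * ∑ s', P s₀ a s' * (R s₀ a + γ * Vπt s') := by
        conv_lhs => rw [hVπt]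
        rfl
      have hδeq : δ = Vh s₀ - Vπt s₀ := by rw [hδdef, hW]
      rw [hδeq] at this ⊢
      linarith [hVh0, hVt0]
    · have hπhs : πh s₀ = π s₀ := by rw [hπh s₀, if_neg h]
      have hW : W s₀ = Vπ s₀ := max_eq_left (not_lt.1 h)
      have hkey : ∀ t, δ ≤ Vh t - Vπ t := fun t => by
        have : Vπ t ≤ W t := le_max_left _ _
        linarith [key t]
      have := step P R γ hγ0.le hP s₀ (π s₀) (hπ.1 s₀) (hπ.2 s₀) Vh Vπ δ hkey
      have hVh0 : Vh s₀ = ∑ a, π s₀ a * ∑ s', P s₀ a s' * (R s₀ a + γ * Vh s') := by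
        rw [hVhB s₀]; unfold Bellman; rw [hπhs]
      have hVp0 : Vπ s₀ = ∑ a, π s₀ a * ∑ s', P s₀ a s' * (R s₀ a + γ * Vπ s') := by
        conv_lhs => rw [hVπ]
        rfl
      have hδeq : δ = Vh s₀ - Vπ s₀ := by rw [hδdef, hW]
      rw [hδeq] at this ⊢
      linarith [hVh0, hVp0]
  have hδ0 : 0 ≤ δ := by nlinarith
  have := key s
  have hWs : Vπt s ≤ W s := le_max_right _ _
  linarith
end

section
/- If there exists a state s₀ with V^π(s₀) > V^π̃(s₀) and a state s₁ with V^π̃(s₁) > V^π(s₁), then the hybrid policy π^hypo is strictly better than π at some state and strictly better than π̃ at some state: V^{π^hypo}(s₁) ≥ V^π̃(s₁) > V^π(s₁) and V^{π^hypo}(s₀) ≥ V^π(s₀) > V^π̃(s₀). -/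
open Finset Filter

/-- Key estimate: if `δ ≤ V s' - W s'` for all `s'`, then
`Bellman μ W s + γ δ ≤ Bellman μ V s`. -/
lemma bellman_key {S A : Type*} [Fintype S] [Fintype A]
    (P : S → A → S → ℝ) (R : S → A → ℝ) (γ : ℝ) (hγ0 : 0 < γ)
    (hP : IsKernel P) (μ : S → A → ℝ) (s : S)
    (hμ0 : ∀ a, 0 ≤ μ s a) (hμ1 : ∑ a, μ s a = 1)
    (V W : S → ℝ) (δ : ℝ) (hδ : ∀ s', δ ≤ V s' - W s') :
    Bellman P R γ μ W s + γ * δ ≤ Bellman P R γ μ V s := by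
  have h1 : Bellman P R γ μ V s - Bellman P R γ μ W s
      = γ * ∑ a, μ s a * ∑ s', P s a s' * (V s' - W s') := by
    simp only [Bellman, ← Finset.sum_sub_distrib, ← mul_sub, Finset.mul_sum]
    refine Finset.sum_congr rfl fun a _ => Finset.sum_congr rfl fun s' _ => by ring
  have h2 : δ ≤ ∑ a, μ s a * ∑ s', P s a s' * (V s' - W s') := by
    have hinner : ∀ a, δ ≤ ∑ s', P s a s' * (V s' - W s') := by
      intro a
      calc δ = ∑ s', P s a s' * δ := by rw [← Finset.sum_mul, hP.2 s a, one_mul]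
        _ ≤ ∑ s', P s a s' * (V s' - W s') :=
          Finset.sum_le_sum fun s' _ =>
            mul_le_mul_of_nonneg_left (hδ s') (hP.1 s a s')
    calc δ = ∑ a, μ s a * δ := by rw [← Finset.sum_mul, hμ1, one_mul]
      _ ≤ _ := Finset.sum_le_sum fun a _ =>
          mul_le_mul_of_nonneg_left (hinner a) (hμ0 a)
  nlinarith [mul_le_mul_of_nonneg_left h2 hγ0.le]

theorem hybrid_strictly_better_somewhere {S A : Type*} [Fintype S] [Fintype A]
    (P : S → A → S → ℝ) (R : S → A → ℝ) (γ : ℝ)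
    (hγ0 : 0 < γ) (hγ1 : γ < 1) (hP : IsKernel P)
    (π πt : S → A → ℝ) (hπ : IsPolicy π) (hπt : IsPolicy πt)
    (Vπ Vπt : S → ℝ)
    (hVπ : Vπ = Bellman P R γ π Vπ)
    (hVπt : Vπt = Bellman P R γ πt Vπt)
    (πh : S → A → ℝ)
    (hπh : ∀ s, πh s = if Vπ s < Vπt s then πt s else π s)
    (Vh : S → ℝ) (hVh : Vh = Bellman P R γ πh Vh)
    (s₀ s₁ : S) (h₀ : Vπ s₀ > Vπt s₀) (h₁ : Vπt s₁ > Vπ s₁) :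
    (Vh s₁ ≥ Vπt s₁ ∧ Vπt s₁ > Vπ s₁) ∧
    (Vh s₀ ≥ Vπ s₀ ∧ Vπ s₀ > Vπt s₀) := by
  set W : S → ℝ := fun s => max (Vπ s) (Vπt s) with hW
  have hπh0 : ∀ s a, 0 ≤ πh s a := by
    intro s a; rw [hπh s]; split <;> [exact hπt.1 s a; exact hπ.1 s a]
  have hπh1 : ∀ s, ∑ a, πh s a = 1 := by
    intro s; rw [hπh s]; split <;> [exact hπt.2 s; exact hπ.2 s]
  have hBW : ∀ s, W s ≤ Bellman P R γ πh W s := by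
    intro s
    by_cases h : Vπ s < Vπt s
    · have hWs : W s = Vπt s := max_eq_right h.le
      have hb : Bellman P R γ πh W s = Bellman P R γ πt W s := by
        simp only [Bellman, hπh s, if_pos h]
      have := bellman_key P R γ hγ0 hP πt s (hπt.1 s) (hπt.2 s) W Vπt 0
        (fun s' => by simp [hW, le_max_right])
      rw [hb, hWs, hVπt]
      simpa using this
    · have hWs : W s = Vπ s := max_eq_left (not_lt.mp h)
      have hb : Bellman P R γ πh W s = Bellman P R γ π W s := by
        simp only [Bellman, hπh s, if_neg h]
      have := bellman_key P R γ hγ0 hP π s (hπ.1 s) (hπ.2 s) W Vπ 0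
        (fun s' => by simp [hW, le_max_left])
      rw [hb, hWs, hVπ]
      simpa using this
  have hne : (Finset.univ : Finset S).Nonempty := ⟨s₀, Finset.mem_univ s₀⟩
  obtain ⟨sm, -, hsm⟩ := Finset.exists_min_image Finset.univ (fun s => Vh s - W s) hne
  have hδ : ∀ s', Vh sm - W sm ≤ Vh s' - W s' := fun s' => hsm s' (Finset.mem_univ s')
  have hkey := bellman_key P R γ hγ0 hP πh sm (hπh0 sm) (hπh1 sm) Vh W (Vh sm - W sm) hδ
  have hVhsm : Vh sm = Bellman P R γ πh Vh sm := congrFun hVh sm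
  have hmin0 : 0 ≤ Vh sm - W sm := by nlinarith [hBW sm]
  have hWle : ∀ s, W s ≤ Vh s := fun s => by have := hδ s; linarith
  refine ⟨⟨le_trans (le_max_right _ _) (hWle s₁), h₁⟩,
          ⟨le_trans (le_max_left _ _) (hWle s₀), h₀⟩⟩
end

section
/- Define V_n(s) recursively by V_0(s) = max(V^π(s), V^π̃(s)) and V_{n+1}(s) = (T^{π^hypo} V_n)(s). Then the sequence V_n is pointwise non-decreasing in n, i.e., V_{n+1}(s) ≥ V_n(s) for all s and all n ≥ 0. -/
open Finset Filter

private lemma bellman_mono {S A : Type*} [Fintype S] [Fintype A]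
    (P : S → A → S → ℝ) (R : S → A → ℝ) (γ : ℝ)
    (hγ0 : 0 < γ) (hP : IsKernel P)
    (μ : S → A → ℝ) (s : S) (hμ : ∀ a, 0 ≤ μ s a)
    (V W : S → ℝ) (hVW : ∀ s', V s' ≤ W s') :
    Bellman P R γ μ V s ≤ Bellman P R γ μ W s := by
  unfold Bellman
  refine Finset.sum_le_sum fun a _ => ?_
  refine mul_le_mul_of_nonneg_left ?_ (hμ a)
  refine Finset.sum_le_sum fun s' _ => ?_
  refine mul_le_mul_of_nonneg_left ?_ (hP.1 s a s')
  have := hVW s'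
  nlinarith

theorem iterates_monotone {S A : Type*} [Fintype S] [Fintype A]
    (P : S → A → S → ℝ) (R : S → A → ℝ) (γ : ℝ)
    (hγ0 : 0 < γ) (hγ1 : γ < 1) (hP : IsKernel P)
    (π πt : S → A → ℝ) (hπ : IsPolicy π) (hπt : IsPolicy πt)
    (Vπ Vπt : S → ℝ)
    (hVπ : Vπ = Bellman P R γ π Vπ)
    (hVπt : Vπt = Bellman P R γ πt Vπt)
    (πh : S → A → ℝ)
    (hπh : ∀ s, πh s = if Vπ s < Vπt s then πt s else π s)
    (Vn : ℕ → S → ℝ)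
    (h0 : Vn 0 = fun s => max (Vπ s) (Vπt s))
    (hstep : ∀ n, Vn (n + 1) = Bellman P R γ πh (Vn n)) :
    ∀ n s, Vn n s ≤ Vn (n + 1) s := by
  have hπhpos : ∀ s a, 0 ≤ πh s a := by
    intro s a
    rw [hπh s]
    split <;> [exact hπt.1 s a; exact hπ.1 s a]
  have hV0 : ∀ s', Vπ s' ≤ Vn 0 s' ∧ Vπt s' ≤ Vn 0 s' := by
    intro s'; rw [h0]; exact ⟨le_max_left _ _, le_max_right _ _⟩
  intro n
  induction n with
  | zero =>
    intro s
    rw [hstep 0]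
    have hVn0 : Vn 0 s = max (Vπ s) (Vπt s) := by rw [h0]
    rw [hVn0]
    rcases lt_or_ge (Vπ s) (Vπt s) with h | h
    · rw [max_eq_right h.le]
      have hb : Bellman P R γ πt Vπt s ≤ Bellman P R γ πh (Vn 0) s := by
        have heq : Bellman P R γ πh (Vn 0) s = Bellman P R γ πt (Vn 0) s := by
          unfold Bellman
          refine Finset.sum_congr rfl fun a _ => ?_
          rw [hπh s, if_pos h]
        rw [heq]
        exact bellman_mono P R γ hγ0 hP πt s (hπt.1 s) _ _ (fun s' => (hV0 s').2)
      calc Vπt s = Bellman P R γ πt Vπt s := by rw [← hVπt]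
        _ ≤ _ := hb
    · rw [max_eq_left h]
      have heq : Bellman P R γ πh (Vn 0) s = Bellman P R γ π (Vn 0) s := by
        unfold Bellman
        refine Finset.sum_congr rfl fun a _ => ?_
        rw [hπh s, if_neg (not_lt.mpr h)]
      calc Vπ s = Bellman P R γ π Vπ s := by rw [← hVπ]
        _ ≤ Bellman P R γ π (Vn 0) s :=
          bellman_mono P R γ hγ0 hP π s (hπ.1 s) _ _ (fun s' => (hV0 s').1)
        _ = Bellman P R γ πh (Vn 0) s := heq.symm
  | succ n ih =>
    intro s
    rw [hstep (n+1), hstep n]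
    refine bellman_mono P R γ hγ0 hP πh s (hπhpos s) _ _ fun s' => ?_
    rw [← hstep n]; exact ih s'
end

section
/- For any two stationary policies π and π̃ on a finite MDP, the hybrid policy π^hypo satisfies sup_s (V^{π^hypo}(s) − max(V^π(s), V^π̃(s))) ≥ 0, with equality everywhere if and only if max(V^π, V^π̃) is a fixed point of T^{π^hypo}. -/
open Finset Filter

lemma Bellman_mono {S A : Type*} [Fintype S] [Fintype A]
    (P : S → A → S → ℝ) (R : S → A → ℝ) (γ : ℝ) (hγ : 0 ≤ γ)
    (hP : IsKernel P) (μ : S → A → ℝ) (hμ : ∀ s a, 0 ≤ μ s a)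
    (U U' : S → ℝ) (h : ∀ t, U t ≤ U' t) (s : S) :
    Bellman P R γ μ U s ≤ Bellman P R γ μ U' s := by
  unfold Bellman
  refine Finset.sum_le_sum fun a _ => mul_le_mul_of_nonneg_left ?_ (hμ s a)
  refine Finset.sum_le_sum fun s' _ => mul_le_mul_of_nonneg_left ?_ (hP.1 s a s')
  have := mul_le_mul_of_nonneg_left (h s') hγ
  linarith

lemma Bellman_shift {S A : Type*} [Fintype S] [Fintype A]
    (P : S → A → S → ℝ) (R : S → A → ℝ) (γ : ℝ)
    (hP : IsKernel P) (μ : S → A → ℝ) (hμ : IsPolicy μ)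
    (V : S → ℝ) (c : ℝ) (s : S) :
    Bellman P R γ μ (fun t => V t + c) s = Bellman P R γ μ V s + γ * c := by
  unfold Bellman
  have h1 : ∀ a, ∑ s', P s a s' * (R s a + γ * (V s' + c))
      = (∑ s', P s a s' * (R s a + γ * V s')) + γ * c := by
    intro a
    have h2 : ∑ s', P s a s' * (R s a + γ * (V s' + c))
        = ∑ s', (P s a s' * (R s a + γ * V s') + P s a s' * (γ * c)) := by
      refine Finset.sum_congr rfl fun s' _ => by ring
    rw [h2, Finset.sum_add_distrib, ← Finset.sum_mul, hP.2 s a, one_mul]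
  have h3 : ∑ a, μ s a * ((∑ s', P s a s' * (R s a + γ * V s')) + γ * c)
      = ∑ a, (μ s a * (∑ s', P s a s' * (R s a + γ * V s')) + μ s a * (γ * c)) := by
    refine Finset.sum_congr rfl fun a _ => by ring
  simp only [h1]
  rw [h3, Finset.sum_add_distrib, ← Finset.sum_mul, hμ.2 s, one_mul]

lemma le_of_subinvariant {S A : Type*} [Fintype S] [Fintype A] [Nonempty S]
    (P : S → A → S → ℝ) (R : S → A → ℝ) (γ : ℝ)
    (hγ0 : 0 < γ) (hγ1 : γ < 1) (hP : IsKernel P)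
    (μ : S → A → ℝ) (hμ : IsPolicy μ)
    (U V : S → ℝ) (hU : ∀ s, U s ≤ Bellman P R γ μ U s)
    (hV : ∀ s, Bellman P R γ μ V s = V s) : ∀ s, U s ≤ V s := by
  set δ := Finset.univ.sup' Finset.univ_nonempty (fun s => U s - V s) with hδ
  obtain ⟨s0, _, hs0⟩ := Finset.exists_mem_eq_sup' Finset.univ_nonempty (fun s => U s - V s)
  have hle : ∀ s, U s ≤ V s + δ := by
    intro s
    have := Finset.le_sup' (fun s => U s - V s) (Finset.mem_univ s)
    rw [← hδ] at this; linarith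
  have key : U s0 ≤ V s0 + γ * δ := by
    calc U s0 ≤ Bellman P R γ μ U s0 := hU s0
    _ ≤ Bellman P R γ μ (fun t => V t + δ) s0 :=
        Bellman_mono P R γ hγ0.le hP μ hμ.1 _ _ hle s0
    _ = Bellman P R γ μ V s0 + γ * δ := Bellman_shift P R γ hP μ hμ V δ s0
    _ = V s0 + γ * δ := by rw [hV s0]
  have hδs : δ = U s0 - V s0 := hδ.trans hs0
  have hδ0 : δ ≤ 0 := by rw [hδs] at key ⊢; nlinarith
  intro s
  have := hle s; linarith

theorem hybrid_sup_gap_nonneg {S A : Type*} [Fintype S] [Fintype A]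
    (P : S → A → S → ℝ) (R : S → A → ℝ) (γ : ℝ)
    (hγ0 : 0 < γ) (hγ1 : γ < 1) (hP : IsKernel P)
    (π πt : S → A → ℝ) (hπ : IsPolicy π) (hπt : IsPolicy πt)
    (Vπ Vπt : S → ℝ)
    (hVπ : Vπ = Bellman P R γ π Vπ)
    (hVπt : Vπt = Bellman P R γ πt Vπt)
    (πh : S → A → ℝ)
    (hπh : ∀ s, πh s = if Vπ s < Vπt s then πt s else π s)
    (Vh : S → ℝ) (hVh : Vh = Bellman P R γ πh Vh)
    [Nonempty S] :
    (0 ≤ ⨆ s, (Vh s - max (Vπ s) (Vπt s))) ∧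
    ((∀ s, Vh s = max (Vπ s) (Vπt s)) ↔
      (∀ s, Bellman P R γ πh (fun s' => max (Vπ s') (Vπt s')) s
        = max (Vπ s) (Vπt s))) := by
  set W : S → ℝ := fun s => max (Vπ s) (Vπt s) with hW
  have hπhP : IsPolicy πh := by
    constructor
    · intro s a; rw [hπh s]; split
      · exact hπt.1 s a
      · exact hπ.1 s a
    · intro s; rw [hπh s]; split
      · exact hπt.2 s
      · exact hπ.2 s
  have hWle : ∀ s, W s ≤ Bellman P R γ πh W s := by
    intro s
    by_cases h : Vπ s < Vπt s
    · have hWs : W s = Vπt s := max_eq_right h.le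
      have heq : Bellman P R γ πh W s = Bellman P R γ πt W s := by
        simp [Bellman, hπh s, if_pos h]
      rw [hWs, heq]
      calc Vπt s = Bellman P R γ πt Vπt s := by rw [← hVπt]
      _ ≤ Bellman P R γ πt W s :=
          Bellman_mono P R γ hγ0.le hP πt hπt.1 _ _ (fun t => le_max_right _ _) s
    · have hWs : W s = Vπ s := max_eq_left (not_lt.mp h)
      have heq : Bellman P R γ πh W s = Bellman P R γ π W s := by
        simp [Bellman, hπh s, if_neg h]
      rw [hWs, heq]
      calc Vπ s = Bellman P R γ π Vπ s := by rw [← hVπ]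
      _ ≤ Bellman P R γ π W s :=
          Bellman_mono P R γ hγ0.le hP π hπ.1 _ _ (fun t => le_max_left _ _) s
  have hVhfix : ∀ s, Bellman P R γ πh Vh s = Vh s := fun s => by rw [← hVh]
  have hWleVh : ∀ s, W s ≤ Vh s :=
    le_of_subinvariant P R γ hγ0 hγ1 hP πh hπhP W Vh hWle hVhfix
  constructor
  · obtain ⟨s0⟩ := ‹Nonempty S›
    have hbdd : BddAbove (Set.range fun s => Vh s - W s) :=
      (Set.finite_range _).bddAbove
    calc (0:ℝ) ≤ Vh s0 - W s0 := by linarith [hWleVh s0]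
    _ ≤ ⨆ s, (Vh s - W s) := le_ciSup hbdd s0
  · constructor
    · intro h s
      have : W = Vh := funext fun s => (h s).symm
      rw [this, hVhfix s, h s]
    · intro hfix s
      have hVhleW : ∀ s, Vh s ≤ W s := by
        refine le_of_subinvariant P R γ hγ0 hγ1 hP πh hπhP Vh W
          (fun s => le_of_eq (hVhfix s).symm) ?_
        intro s; exact hfix s
      exact le_antisymm (hVhleW s) (hWleVh s)
end
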